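/- arXiv:1704.05265 — 2 statements merged into one kernel-verified Lean document; each statement's English description precedes it below -/
import Mathlib

section
/- Let 0 < n < m be integers, let y₀ be analytic at 0 ∈ ℂ with ord₀ y₀ = m, and set φ(t) = (t^n, y₀(t)). Let X₁, Y₁ be analytic at (0,0) ∈ ℂ² such that Y₁ vanishes to order at least 2 at (0,0) and the one-variable function x ↦ X₁(x,0) vanishes to order at least 2 at 0, and define X_i inductively by X_{i+1} = (∂X_i/∂x)·X₁ + (∂X_i/∂y)·Y₁. Then for every i ≥ 1 there is a function h_i analytic at 0 ∈ ℂ with X_i(φ(t)) = t^{n+1} h_i(t); in particular, if X_i∘φ is not identically zero then ord₀(X_i∘φ) > n. -/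
/-!
Along `φ(t) = (tⁿ, y₀(t))` we have `y₀ = o(tⁿ)`. Since `X₁` and `Y₁` vanish at the origin and
their differentials kill `(1, 0)`, first-order Taylor expansion gives `X₁ ∘ φ = o(tⁿ)` and
`Y₁ ∘ φ = o(tⁿ)`, and an analytic function that is `o(tⁿ)` is divisible by `tⁿ⁺¹`. Then
`X_{i+1} ∘ φ = (∂ₓXᵢ ∘ φ)(X₁ ∘ φ) + (∂_yXᵢ ∘ φ)(Y₁ ∘ φ)` has analytic coefficients, so it is
divisible by `tⁿ⁺¹` as well; only the analyticity of `Xᵢ` needs an induction.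
-/
open Filter Asymptotics Topology

variable {𝕜 : Type*} [NontriviallyNormedField 𝕜]

theorem eq_zero_of_pow_mul_isLittleO_pow {G : 𝕜 → 𝕜} (hG : ContinuousAt G 0) {k : ℕ}
    (h : (fun t => t ^ k * G t) =o[𝓝 0] fun t => t ^ k) : G 0 = 0 := by
  have hdiv : G =ᶠ[𝓝[≠] 0] fun t => t ^ k * G t / t ^ k := by
    filter_upwards [self_mem_nhdsWithin] with t ht
    rw [mul_div_cancel_left₀ _ (pow_ne_zero k ht)]
  exact tendsto_nhds_unique (hG.tendsto.mono_left nhdsWithin_le_nhds)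
    ((h.tendsto_div_nhds_zero.mono_left nhdsWithin_le_nhds).congr' hdiv.symm)

theorem AnalyticAt.exists_eventuallyEq_pow_succ_mul_of_isLittleO {f : 𝕜 → 𝕜} {n : ℕ}
    (hf : AnalyticAt 𝕜 f 0) (ho : f =o[𝓝 0] fun t => t ^ n) :
    ∃ h : 𝕜 → 𝕜, AnalyticAt 𝕜 h 0 ∧ ∀ᶠ t in 𝓝 0, f t = t ^ (n + 1) * h t := by
  suffices ((n + 1 : ℕ) : ℕ∞) ≤ analyticOrderAt f 0 by
    simpa using (natCast_le_analyticOrderAt hf).mp this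
  by_contra! hlt
  obtain ⟨k, hk⟩ := ENat.ne_top_iff_exists.mp hlt.ne_top
  obtain ⟨G, hG, hG0, hfG⟩ := hf.analyticOrderAt_eq_natCast.mp hk.symm
  have hkn : k ≤ n := by
    rw [← hk] at hlt
    exact Nat.lt_succ_iff.mp (by exact_mod_cast hlt)
  have hpow : (fun t : 𝕜 => t ^ n) =O[𝓝 0] fun t => t ^ k := by
    rcases hkn.lt_or_eq with hkn | rfl
    · exact (isLittleO_pow_pow hkn).isBigO
    · exact isBigO_refl _ _
  have hfG' : f =ᶠ[𝓝 0] fun t => t ^ k * G t := by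
    filter_upwards [hfG] with t ht
    simpa using ht
  exact hG0 (eq_zero_of_pow_mul_isLittleO_pow (k := k) hG.continuousAt
    ((hfG'.symm.trans_isLittleO ho).trans_isBigO hpow))

theorem HasFDerivAt.isLittleO_comp {E F G α : Type*}
    [NormedAddCommGroup E] [NormedSpace 𝕜 E] [NormedAddCommGroup F] [NormedSpace 𝕜 F]
    [NormedAddCommGroup G] {f : E → F} {f' : E →L[𝕜] F} (hf : HasFDerivAt f f' 0)
    (hf0 : f 0 = 0) {φ : α → E} {u : α → G} {l : Filter α} (hφ : Tendsto φ l (𝓝 0))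
    (hφu : φ =O[l] u) (hlin : (fun a => f' (φ a)) =o[l] u) : (fun a => f (φ a)) =o[l] u := by
  have hrem := hf.isLittleO.comp_tendsto hφ
  simp only [Function.comp_def, hf0, sub_zero] at hrem
  simpa using (hrem.trans_isBigO hφu).add hlin

theorem HasFDerivAt.isLittleO_comp_pow_prod {E : Type*} [NormedAddCommGroup E] [NormedSpace 𝕜 E]
    {F : 𝕜 × 𝕜 → E} {F' : 𝕜 × 𝕜 →L[𝕜] E} (hF : HasFDerivAt F F' 0) (hF0 : F 0 = 0)
    (hFx : F' (1, 0) = 0) {n : ℕ} (hn : n ≠ 0) {y : 𝕜 → 𝕜} (hy : y =o[𝓝 0] fun t => t ^ n) :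
    (fun t => F (t ^ n, y t)) =o[𝓝 0] fun t => t ^ n := by
  have hpow : Tendsto (fun t : 𝕜 => t ^ n) (𝓝 0) (𝓝 0) :=
    (continuous_pow n).tendsto' 0 0 (zero_pow hn)
  have hlin : ∀ t, F' (t ^ n, y t) = F' (0, y t) := fun t => by
    rw [show (t ^ n, y t) = t ^ n • ((1 : 𝕜), (0 : 𝕜)) + ((0 : 𝕜), y t) by simp, map_add,
      map_smul, hFx, smul_zero, zero_add]
  refine hF.isLittleO_comp hF0 (hpow.prodMk_nhds (hy.trans_tendsto hpow))
    ((isBigO_refl _ _).prod_left hy.isBigO) ?_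
  simp only [hlin]
  exact (F'.isBigO_comp _ _).trans_isLittleO ((isLittleO_zero _ _).prod_left hy)

/-- The Lie derivative of `F` along `P ∂ₓ + Q ∂_y`, so that `X_{i+1} = derivAlong X₁ Y₁ Xᵢ`. -/
noncomputable def derivAlong (P Q F : 𝕜 × 𝕜 → 𝕜) (p : 𝕜 × 𝕜) : 𝕜 :=
  fderiv 𝕜 F p (1, 0) * P p + fderiv 𝕜 F p (0, 1) * Q p

variable [CompleteSpace 𝕜]

theorem AnalyticAt.derivAlong {P Q F : 𝕜 × 𝕜 → 𝕜} {p : 𝕜 × 𝕜} (hF : AnalyticAt 𝕜 F p)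
    (hP : AnalyticAt 𝕜 P p) (hQ : AnalyticAt 𝕜 Q p) : AnalyticAt 𝕜 (derivAlong P Q F) p := by
  have hF' (v : 𝕜 × 𝕜) : AnalyticAt 𝕜 (fun q => fderiv 𝕜 F q v) p :=
    ((ContinuousLinearMap.apply 𝕜 𝕜 v).analyticAt _).comp hF.fderiv
  exact ((hF' _).mul hP).add ((hF' _).mul hQ)

theorem exists_eventuallyEq_derivAlong_comp_pow_mul {P Q F : 𝕜 × 𝕜 → 𝕜} {φ : 𝕜 → 𝕜 × 𝕜}
    (hφ : AnalyticAt 𝕜 φ 0) (hF : AnalyticAt 𝕜 F (φ 0)) {k : ℕ} {A B : 𝕜 → 𝕜}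
    (hA : AnalyticAt 𝕜 A 0) (hB : AnalyticAt 𝕜 B 0)
    (hPA : ∀ᶠ t in 𝓝 0, P (φ t) = t ^ k * A t) (hQB : ∀ᶠ t in 𝓝 0, Q (φ t) = t ^ k * B t) :
    ∃ h : 𝕜 → 𝕜, AnalyticAt 𝕜 h 0 ∧ ∀ᶠ t in 𝓝 0, derivAlong P Q F (φ t) = t ^ k * h t := by
  have hF' (v : 𝕜 × 𝕜) : AnalyticAt 𝕜 (fun t => fderiv 𝕜 F (φ t) v) 0 :=
    ((ContinuousLinearMap.apply 𝕜 𝕜 v).analyticAt _).comp (hF.fderiv.comp hφ)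
  refine ⟨fun t => fderiv 𝕜 F (φ t) (1, 0) * A t + fderiv 𝕜 F (φ t) (0, 1) * B t,
    ((hF' _).mul hA).add ((hF' _).mul hB), ?_⟩
  filter_upwards [hPA, hQB] with t hP hQ
  rw [derivAlong, hP, hQ]
  ring

theorem Xi_along_branch_order_gt_n_general
    (n m : ℕ) (hn : 0 < n) (hnm : n < m)
    (y₀ : ℂ → ℂ) (hy₀ : AnalyticAt ℂ y₀ 0)
    (g : ℂ → ℂ) (hg : AnalyticAt ℂ g 0)
    (hy₀eq : ∀ᶠ t in nhds (0 : ℂ), y₀ t = t ^ m * g t)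
    (X₁ Y₁ : ℂ × ℂ → ℂ)
    (hX₁ : AnalyticAt ℂ X₁ 0) (hY₁ : AnalyticAt ℂ Y₁ 0)
    (hY₁0 : Y₁ 0 = 0) (hY₁d : fderiv ℂ Y₁ 0 = 0)
    (hX₁0 : X₁ 0 = 0) (hX₁x : deriv (fun x : ℂ => X₁ (x, 0)) 0 = 0)
    (X : ℕ → ℂ × ℂ → ℂ) (hX1 : X 1 = X₁)
    (hrec : ∀ i : ℕ, 1 ≤ i → ∀ p : ℂ × ℂ,
      X (i + 1) p = fderiv ℂ (X i) p (1, 0) * X₁ p + fderiv ℂ (X i) p (0, 1) * Y₁ p) :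
    ∀ i : ℕ, 1 ≤ i → ∃ h : ℂ → ℂ, AnalyticAt ℂ h 0 ∧
      ∀ᶠ t in nhds (0 : ℂ), X i (t ^ n, y₀ t) = t ^ (n + 1) * h t := by
  have hy₀o : y₀ =o[𝓝 0] fun t => t ^ n :=
    Filter.EventuallyEq.trans_isLittleO hy₀eq <| by
      simpa using (isLittleO_pow_pow hnm).mul_isBigO (hg.continuousAt.tendsto.isBigO_one ℂ)
  set φ : ℂ → ℂ × ℂ := fun t => (t ^ n, y₀ t)
  have hφ : AnalyticAt ℂ φ 0 := (analyticAt_id.pow n).prod hy₀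
  have hφ0 : φ 0 = 0 := by
    simpa [φ, hn.ne', (hn.trans hnm).ne'] using hy₀eq.self_of_nhds
  have hX₁x' : fderiv ℂ X₁ 0 (1, 0) = 0 := by
    rw [← (hX₁.differentiableAt.hasFDerivAt.comp_hasDerivAt_of_eq (0 : ℂ)
      ((hasDerivAt_id 0).prodMk (hasDerivAt_const 0 0)) rfl).deriv]
    exact hX₁x
  obtain ⟨A, hA, hXA⟩ := (hX₁.comp_of_eq hφ hφ0).exists_eventuallyEq_pow_succ_mul_of_isLittleO
    (hX₁.differentiableAt.hasFDerivAt.isLittleO_comp_pow_prod hX₁0 hX₁x' hn.ne' hy₀o)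
  obtain ⟨B, hB, hYB⟩ := (hY₁.comp_of_eq hφ hφ0).exists_eventuallyEq_pow_succ_mul_of_isLittleO
    (hY₁.differentiableAt.hasFDerivAt.isLittleO_comp_pow_prod hY₁0 (by simp [hY₁d]) hn.ne' hy₀o)
  have hXrec (i : ℕ) (hi : 1 ≤ i) : X (i + 1) = derivAlong X₁ Y₁ (X i) := funext (hrec i hi)
  have hXan (i : ℕ) (hi : 1 ≤ i) : AnalyticAt ℂ (X i) 0 := by
    induction i, hi using Nat.le_induction with
    | base => rwa [hX1]
    | succ i hi ih => rw [hXrec i hi]; exact ih.derivAlong hX₁ hY₁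
  intro i hi
  induction i, hi using Nat.le_induction with
  | base => exact ⟨A, hA, by rwa [hX1]⟩
  | succ i hi _ =>
    rw [hXrec i hi]
    exact exists_eventuallyEq_derivAlong_comp_pow_mul hφ (hφ0 ▸ hXan i hi) hA hB hXA hYB

/-- Along the branch `φ(t) = (t^n, y₀(t))` (with `ord₀ y₀ = m > n`), every iterate
`X_i` of the scheme `X_{i+1} = (∂X_i/∂x)·X₁ + (∂X_i/∂y)·Y₁` satisfies
`X_i(φ(t)) = t^{n+1} h_i(t)` for some analytic `h_i`; in particular its order is `> n`. -/
theorem Xi_along_branch_order_gt_n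
    (n m : ℕ) (hn : 0 < n) (hnm : n < m)
    (y₀ : ℂ → ℂ) (hy₀ : AnalyticAt ℂ y₀ 0)
    (g : ℂ → ℂ) (hg : AnalyticAt ℂ g 0) (hg0 : g 0 ≠ 0)
    (hy₀eq : ∀ᶠ t in nhds (0 : ℂ), y₀ t = t ^ m * g t)
    (X₁ Y₁ : ℂ × ℂ → ℂ)
    (hX₁ : AnalyticAt ℂ X₁ 0) (hY₁ : AnalyticAt ℂ Y₁ 0)
    (hY₁0 : Y₁ 0 = 0) (hY₁d : fderiv ℂ Y₁ 0 = 0)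
    (hX₁0 : X₁ 0 = 0) (hX₁x : deriv (fun x : ℂ => X₁ (x, 0)) 0 = 0)
    (X : ℕ → ℂ × ℂ → ℂ) (hX1 : X 1 = X₁)
    (hrec : ∀ i : ℕ, 1 ≤ i → ∀ p : ℂ × ℂ,
      X (i + 1) p = fderiv ℂ (X i) p (1, 0) * X₁ p + fderiv ℂ (X i) p (0, 1) * Y₁ p) :
    ∀ i : ℕ, 1 ≤ i → ∃ h : ℂ → ℂ, AnalyticAt ℂ h 0 ∧
      ∀ᶠ t in nhds (0 : ℂ), X i (t ^ n, y₀ t) = t ^ (n + 1) * h t :=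
  Xi_along_branch_order_gt_n_general n m hn hnm y₀ hy₀ g hg hy₀eq X₁ Y₁ hX₁ hY₁ hY₁0 hY₁d hX₁0 hX₁x
    X hX1 hrec
end

section
/- (Rigidity of Puiseux families) Let n ≥ 1, let y₀ be analytic at 0 ∈ ℂ with y₀(0) = 0, and suppose φ(t) = (t^n, y₀(t)) is injective on a neighbourhood V of 0 ∈ ℂ. Let Ȳ(u,s) be analytic on a neighbourhood of (0,0) ∈ ℂ² such that Ȳ(u,0) = y₀(u) for all u near 0 and such that for every (u,s) near (0,0) the point (u^n, Ȳ(u,s)) belongs to φ(V). Then Ȳ(u,s) = y₀(u) for all (u,s) in a neighbourhood of (0,0); that is, the family is independent of the parameter s. -/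
/-!
Fix `u`. Every value `Ȳ(u, s)` is the second coordinate of a point `φ(t)` with `t ^ n = u ^ n`,
so it lies in the finite set `y₀ '' {t ∈ V | t ^ n = u ^ n}`. A continuous function on a connected
set of parameters `s` with values in a finite set is constant, hence `Ȳ(u, s) = Ȳ(u, 0) = y₀(u)`.
-/

open Filter Topology

theorem Set.finite_setOf_pow_eq {R : Type*} [CommRing R] [IsDomain R] {n : ℕ} (hn : 0 < n)
    (c : R) : {t : R | t ^ n = c}.Finite := by
  classical
  exact (Polynomial.nthRoots n c).toFinset.finite_toSet.subset fun t ht => by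
    simpa [Polynomial.mem_nthRoots hn] using ht

theorem eventually_eq_apply_mk_of_mem_isDiscrete {X S Z : Type*} [TopologicalSpace X]
    [TopologicalSpace S] [LocallyConnectedSpace S] [TopologicalSpace Z]
    {F : X × S → Z} {T : X → Set Z} {x₀ : X} {s₀ : S} (hT : ∀ x, IsDiscrete (T x))
    (hF : ∀ᶠ p in 𝓝 (x₀, s₀), ContinuousAt F p ∧ F p ∈ T p.1) :
    ∀ᶠ p in 𝓝 (x₀, s₀), F p = F (p.1, s₀) := by
  obtain ⟨U, hU, W, hW, hUW⟩ := mem_nhds_prod_iff.mp hF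
  obtain ⟨B, ⟨hBo, hs₀B, hBc⟩, hBW⟩ := (LocallyConnectedSpace.open_connected_basis s₀).mem_iff.mp hW
  filter_upwards [prod_mem_nhds hU (hBo.mem_nhds hs₀B)] with ⟨x, s⟩ ⟨hx, hs⟩
  have hslice : ∀ s' ∈ B, ContinuousAt F (x, s') ∧ F (x, s') ∈ T x :=
    fun s' hs' => hUW ⟨hx, hBW hs'⟩
  refine hBc.isPreconnected.constant_of_mapsTo (hT x) (f := fun s' => F (x, s'))
    (fun s' hs' => ?_) (fun s' hs' => (hslice s' hs').2) hs hs₀B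
  exact ((hslice s' hs').1.comp (continuous_const.prodMk continuous_id).continuousAt).continuousWithinAt

theorem rigidity_of_puiseux_families_general
    (n : ℕ) (hn : 1 ≤ n)
    (y₀ : ℂ → ℂ)
    (V : Set ℂ)
    (Yb : ℂ × ℂ → ℂ) (hYb : AnalyticAt ℂ Yb 0)
    (hYb0 : ∀ᶠ u in nhds (0 : ℂ), Yb (u, 0) = y₀ u)
    (hmem : ∀ᶠ p in nhds (0 : ℂ × ℂ),
      ((p.1 ^ n : ℂ), Yb p) ∈ (fun t : ℂ => ((t ^ n : ℂ), y₀ t)) '' V) :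
    ∀ᶠ p in nhds (0 : ℂ × ℂ), Yb p = y₀ p.1 := by
  have hfin (u : ℂ) : (y₀ '' {t ∈ V | t ^ n = u ^ n}).Finite :=
    ((Set.finite_setOf_pow_eq hn (u ^ n)).subset fun _ ht => ht.2).image y₀
  have hconst : ∀ᶠ p in 𝓝 ((0 : ℂ), (0 : ℂ)), Yb p = Yb (p.1, 0) :=
    eventually_eq_apply_mk_of_mem_isDiscrete (fun u => (hfin u).isDiscrete) <|
      (hYb.eventually_analyticAt.and hmem).mono fun _ ⟨hA, t, htV, hφ⟩ =>
        ⟨hA.continuousAt, t, ⟨htV, congrArg Prod.fst hφ⟩, congrArg Prod.snd hφ⟩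
  have hinit : ∀ᶠ p in 𝓝 (0 : ℂ × ℂ), Yb (p.1, 0) = y₀ p.1 :=
    (continuous_fst.tendsto (0 : ℂ × ℂ)).eventually hYb0
  filter_upwards [hconst, hinit] with p h₁ h₂ using h₁.trans h₂

/-- **Rigidity of Puiseux families.** If `Ȳ(u,s)` is an analytic family with
`Ȳ(u,0) = y₀(u)` such that every point `(u^n, Ȳ(u,s))` lies on the injectively
parametrized branch `φ(t) = (t^n, y₀(t))`, then `Ȳ` does not depend on `s`. -/
theorem rigidity_of_puiseux_families
    (n : ℕ) (hn : 1 ≤ n)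
    (y₀ : ℂ → ℂ) (hy₀ : AnalyticAt ℂ y₀ 0) (hy₀0 : y₀ 0 = 0)
    (V : Set ℂ) (hV : V ∈ nhds (0 : ℂ))
    (hinj : Set.InjOn (fun t : ℂ => ((t ^ n : ℂ), y₀ t)) V)
    (Yb : ℂ × ℂ → ℂ) (hYb : AnalyticAt ℂ Yb 0)
    (hYb0 : ∀ᶠ u in nhds (0 : ℂ), Yb (u, 0) = y₀ u)
    (hmem : ∀ᶠ p in nhds (0 : ℂ × ℂ),
      ((p.1 ^ n : ℂ), Yb p) ∈ (fun t : ℂ => ((t ^ n : ℂ), y₀ t)) '' V) :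
    ∀ᶠ p in nhds (0 : ℂ × ℂ), Yb p = y₀ p.1 :=
  rigidity_of_puiseux_families_general n hn y₀ V Yb hYb hYb0 hmem
end
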